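/- Let P be BT-consistent with respect to r* with strictly positive negative conditional and P_X strictly positive, let B > 0, let ℋ be a set of score functions all bounded in absolute value by B with r* ∈ ℋ, and suppose λ > 0 satisfies E_{P̃}[ (Δ_f − Δ_g)² ] ≥ λ·Ṽar_Q(f − g) for all f, g ∈ ℋ. Then for every r ∈ ℋ, E_{Q_pair}[ (Δ_r(x,y,y') − Δ_{r*}(x,y,y'))² ] ≤ (4/(λ·Z·c_B))·( L_BT(r) − L_BT(r*) ), where c_B = σ(2B)(1 − σ(2B)). -/

import Mathlib

/-!
Write `s = P(x,y,y') + P(x,y',y)` and `a = Δ_{r*}(x,y,y')`. BT-consistency gives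
`P(x,y,y') = s σ(a)`, so symmetrizing the objective writes `2 (L_BT(r) − L_BT(r*))` as the sum
over oriented triples of `s` times the excess logistic loss `ℓ(σ(a), Δ_r) − ℓ(σ(a), a)`.
Since `σ' = σ(1 − σ) ≥ c_B` on margins in `[−2B, 2B]`, the logistic loss is `c_B`-strongly convex
there and each excess is at least `(c_B/2)(Δ_r − a)²`. The resulting sum is `2Z` times the
`P̃`-mean of `(Δ_r − Δ_{r*})²`, which connectivity bounds below by `2Zλ Ṽar_Q(r − r*)`,
while `E_{Q_pair}[(Δ_r − Δ_{r*})²] = 2 Ṽar_Q(r − r*)`.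
-/

open scoped BigOperators

/-- The sigmoid function σ(t) = 1/(1+e^{-t}). -/
noncomputable def sigmoid (t : ℝ) : ℝ := 1 / (1 + Real.exp (-t))

/-- The population Bradley–Terry objective. -/
noncomputable def LBT {X Y : Type*} [Fintype X] [Fintype Y]
    (P : X → Y → Y → ℝ) (r : X → Y → ℝ) : ℝ :=
  -∑ x, ∑ y, ∑ y', P x y y' * Real.log (sigmoid (r x y - r x y'))

/-- Normalizing constant Z of the comparison distribution P̃. -/
noncomputable def Zconst {X Y : Type*} [Fintype X] [Fintype Y] [DecidableEq Y]
    (P : X → Y → Y → ℝ) : ℝ :=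
  (∑ x, ∑ y, ∑ y', if y ≠ y' then P x y y' + P x y' y else 0) / 2

/-- Expectation under the comparison distribution P̃ of a symmetric function of (x,{y,y'}). -/
noncomputable def ePt {X Y : Type*} [Fintype X] [Fintype Y] [DecidableEq Y]
    (P : X → Y → Y → ℝ) (f : X → Y → Y → ℝ) : ℝ :=
  (∑ x, ∑ y, ∑ y', if y ≠ y' then (P x y y' + P x y' y) * f x y y' else 0) /
    (2 * Zconst P)

/-- Expectation under Q_pair, where x ∼ Q_x and y, y' are i.i.d. from Q_y(·|x). -/
noncomputable def eQpair {X Y : Type*} [Fintype X] [Fintype Y]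
    (Qx : X → ℝ) (Qy : X → Y → ℝ) (f : X → Y → Y → ℝ) : ℝ :=
  ∑ x, ∑ y, ∑ y', Qx x * Qy x y * Qy x y' * f x y y'

/-- Ṽar_Q(r) = E_{x∼Q_x}[ Var_{y∼Q_y(·|x)}[ r(x,y) ] ]. -/
noncomputable def tVar {X Y : Type*} [Fintype X] [Fintype Y]
    (Qx : X → ℝ) (Qy : X → Y → ℝ) (r : X → Y → ℝ) : ℝ :=
  ∑ x, Qx x * ((∑ y, Qy x y * (r x y) ^ 2) - (∑ y, Qy x y * r x y) ^ 2)

lemma sigmoid_eq_real_sigmoid : sigmoid = Real.sigmoid := funext fun _ => one_div _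

namespace Real

lemma sigmoid_mul_one_sub_sigmoid (t : ℝ) :
    sigmoid t * (1 - sigmoid t) = (2 + 2 * cosh t)⁻¹ := by
  have h : exp (-t) * exp t = 1 := by rw [← exp_add, neg_add_cancel, exp_zero]
  rw [← sigmoid_neg, sigmoid_def, sigmoid_def, neg_neg, cosh_eq, ← mul_inv]
  congr 1
  linear_combination h

lemma sigmoid_mul_one_sub_sigmoid_le {c t : ℝ} (h : |t| ≤ c) :
    sigmoid c * (1 - sigmoid c) ≤ sigmoid t * (1 - sigmoid t) := by
  have hcosh : cosh t ≤ cosh c := cosh_le_cosh.2 (h.trans (le_abs_self c))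
  rw [sigmoid_mul_one_sub_sigmoid, sigmoid_mul_one_sub_sigmoid]
  gcongr

lemma mul_sub_le_sigmoid_sub_sigmoid {a t c : ℝ} (ha : -c ≤ a) (hat : a ≤ t) (ht : t ≤ c) :
    sigmoid c * (1 - sigmoid c) * (t - a) ≤ sigmoid t - sigmoid a := by
  set K := sigmoid c * (1 - sigmoid c)
  have hderiv : ∀ u, HasDerivAt (fun u => sigmoid u - K * u) (sigmoid u * (1 - sigmoid u) - K) u :=
    fun u => ((hasDerivAt_sigmoid u).sub ((hasDerivAt_id' u).const_mul K)).congr_deriv (by ring)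
  have hmono : MonotoneOn (fun u => sigmoid u - K * u) (Set.Icc (-c) c) := by
    refine monotoneOn_of_hasDerivWithinAt_nonneg (convex_Icc _ _)
      (fun u _ => (hderiv u).continuousAt.continuousWithinAt)
      (fun u _ => (hderiv u).hasDerivWithinAt) fun u hu => ?_
    rw [interior_Icc] at hu
    exact sub_nonneg.2 (sigmoid_mul_one_sub_sigmoid_le (abs_le.2 ⟨hu.1.le, hu.2.le⟩))
  have := hmono ⟨ha, hat.trans ht⟩ ⟨ha.trans hat, ht⟩ hat
  simp only at this
  linarith

lemma sigmoid_sub (a b : ℝ) : sigmoid (a - b) = exp a / (exp a + exp b) := by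
  rw [sigmoid_def, neg_sub, exp_sub]
  field_simp

lemma hasDerivAt_log_sigmoid (t : ℝ) :
    HasDerivAt (fun u => log (sigmoid u)) (sigmoid (-t)) t := by
  convert (hasDerivAt_sigmoid t).log (sigmoid_pos t).ne' using 1
  rw [sigmoid_neg]
  field_simp [(sigmoid_pos t).ne']

noncomputable def logisticLoss (p d : ℝ) : ℝ :=
  -(p * log (sigmoid d)) - (1 - p) * log (sigmoid (-d))

lemma hasDerivAt_logisticLoss (p d : ℝ) : HasDerivAt (logisticLoss p) (sigmoid d - p) d := by
  have hneg : HasDerivAt (fun u => log (sigmoid (-u))) (-sigmoid d) d := by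
    have := (hasDerivAt_log_sigmoid (-d)).comp d (hasDerivAt_neg d)
    rwa [neg_neg, mul_neg_one] at this
  refine (((hasDerivAt_log_sigmoid d).const_mul p).neg.sub (hneg.const_mul (1 - p))).congr_deriv ?_
  rw [sigmoid_neg]
  ring

lemma logisticLoss_sub_logisticLoss_ge {a d c : ℝ} (ha : |a| ≤ c) (hd : |d| ≤ c) :
    sigmoid c * (1 - sigmoid c) / 2 * (d - a) ^ 2 ≤
      logisticLoss (sigmoid a) d - logisticLoss (sigmoid a) a := by
  set K := sigmoid c * (1 - sigmoid c)
  set G : ℝ → ℝ := fun t => logisticLoss (sigmoid a) t - K / 2 * (t - a) ^ 2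
  have hG : ∀ t, HasDerivAt G (sigmoid t - sigmoid a - K * (t - a)) t := fun t => by
    refine ((hasDerivAt_logisticLoss (sigmoid a) t).sub
      ((((hasDerivAt_id' t).sub_const a).pow 2).const_mul (K / 2))).congr_deriv ?_
    push_cast
    ring
  obtain ⟨hca, hac⟩ := abs_le.1 ha
  obtain ⟨hcd, hdc⟩ := abs_le.1 hd
  -- `G` decreases up to `a` and increases after it: by the slope bound on `sigmoid`,
  -- `G' t = sigmoid t - sigmoid a - K (t - a)` has the sign of `t - a` on `[-c, c]`.
  have hGad : G a ≤ G d := by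
    rcases le_total a d with had | hda
    · refine monotoneOn_of_hasDerivWithinAt_nonneg (convex_Icc a c)
        (fun t _ => (hG t).continuousAt.continuousWithinAt)
        (fun t _ => (hG t).hasDerivWithinAt) (fun t ht => ?_) ⟨le_rfl, hac⟩ ⟨had, hdc⟩ had
      rw [interior_Icc] at ht
      linarith [mul_sub_le_sigmoid_sub_sigmoid hca ht.1.le ht.2.le]
    · refine antitoneOn_of_hasDerivWithinAt_nonpos (convex_Icc (-c) a)
        (fun t _ => (hG t).continuousAt.continuousWithinAt)
        (fun t _ => (hG t).hasDerivWithinAt) (fun t ht => ?_) ⟨hcd, hda⟩ ⟨hca, le_rfl⟩ hda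
      rw [interior_Icc] at ht
      linarith [mul_sub_le_sigmoid_sub_sigmoid ht.1.le ht.2.le hac]
  simp only [G] at hGad
  linarith

end Real

lemma apply_eq_add_swap_mul_sigmoid {X Y : Type*} {P : X → Y → Y → ℝ} {PX : X → ℝ}
    {pplus pminus rstar : X → Y → ℝ}
    (hlink : ∀ x y, pplus x y = Real.exp (rstar x y) * pminus x y)
    (hfact : ∀ x yp ym, P x yp ym = PX x * pplus x yp * pminus x ym) (x : X) (y y' : Y) :
    P x y y' = (P x y y' + P x y' y) * Real.sigmoid (rstar x y - rstar x y') := by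
  rw [hfact, hfact, hlink, hlink, Real.sigmoid_sub]
  have : 0 < Real.exp (rstar x y) + Real.exp (rstar x y') := by positivity
  field_simp

section FiniteSums

variable {X Y : Type*} [Fintype X] [Fintype Y]

lemma sum_sum_sum_add_swap (F : X → Y → Y → ℝ) :
    ∑ x, ∑ y, ∑ y', (F x y y' + F x y' y) = 2 * ∑ x, ∑ y, ∑ y', F x y y' := by
  have hswap : ∑ x, ∑ y, ∑ y', F x y' y = ∑ x, ∑ y, ∑ y', F x y y' :=
    Finset.sum_congr rfl fun _ _ => Finset.sum_comm
  simp only [Finset.sum_add_distrib, hswap]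
  ring

lemma two_mul_LBT_sub_LBT {P : X → Y → Y → ℝ} {r₀ : X → Y → ℝ}
    (hBT : ∀ x y y', P x y y' = (P x y y' + P x y' y) * Real.sigmoid (r₀ x y - r₀ x y'))
    (r : X → Y → ℝ) :
    2 * (LBT P r - LBT P r₀) = ∑ x, ∑ y, ∑ y', (P x y y' + P x y' y) *
      (Real.logisticLoss (Real.sigmoid (r₀ x y - r₀ x y')) (r x y - r x y') -
        Real.logisticLoss (Real.sigmoid (r₀ x y - r₀ x y')) (r₀ x y - r₀ x y')) := by
  have hL : LBT P r - LBT P r₀ = ∑ x, ∑ y, ∑ y', P x y y' *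
      (Real.log (Real.sigmoid (r₀ x y - r₀ x y')) - Real.log (Real.sigmoid (r x y - r x y'))) := by
    simp only [LBT, sigmoid_eq_real_sigmoid, neg_sub_neg, ← Finset.sum_sub_distrib, ← mul_sub]
  rw [hL, ← sum_sum_sum_add_swap]
  refine Finset.sum_congr rfl fun x _ => Finset.sum_congr rfl fun y _ =>
    Finset.sum_congr rfl fun y' _ => ?_
  have h₁ := hBT x y y'
  have h₂ := hBT x y' y
  rw [← neg_sub (r₀ x y)] at h₂ ⊢
  rw [← neg_sub (r x y)]
  unfold Real.logisticLoss
  linear_combination (Real.log (Real.sigmoid (r₀ x y - r₀ x y')) -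
      Real.log (Real.sigmoid (r x y - r x y'))) * h₁ +
    (Real.log (Real.sigmoid (-(r₀ x y - r₀ x y'))) - Real.log (Real.sigmoid (-(r x y - r x y')))) *
      (h₂ + (P x y y' + P x y' y) * Real.sigmoid_neg (r₀ x y - r₀ x y'))

lemma LBT_sub_LBT_ge {P : X → Y → Y → ℝ} {r₀ r : X → Y → ℝ} {B : ℝ}
    (hP : ∀ x y y', 0 ≤ P x y y')
    (hBT : ∀ x y y', P x y y' = (P x y y' + P x y' y) * Real.sigmoid (r₀ x y - r₀ x y'))
    (hr₀ : ∀ x y, |r₀ x y| ≤ B) (hr : ∀ x y, |r x y| ≤ B) :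
    Real.sigmoid (2 * B) * (1 - Real.sigmoid (2 * B)) / 4 *
        ∑ x, ∑ y, ∑ y', (P x y y' + P x y' y) * ((r x y - r x y') - (r₀ x y - r₀ x y')) ^ 2 ≤
      LBT P r - LBT P r₀ := by
  have hmargin : ∀ f : X → Y → ℝ, (∀ x y, |f x y| ≤ B) → ∀ x y y', |f x y - f x y'| ≤ 2 * B :=
    fun f hf x y y' => (abs_sub _ _).trans (by linarith [hf x y, hf x y'])
  suffices h : Real.sigmoid (2 * B) * (1 - Real.sigmoid (2 * B)) / 2 *
      ∑ x, ∑ y, ∑ y', (P x y y' + P x y' y) * ((r x y - r x y') - (r₀ x y - r₀ x y')) ^ 2 ≤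
      2 * (LBT P r - LBT P r₀) by linarith
  rw [two_mul_LBT_sub_LBT hBT]
  simp only [Finset.mul_sum]
  refine Finset.sum_le_sum fun x _ => Finset.sum_le_sum fun y _ =>
    Finset.sum_le_sum fun y' _ => ?_
  rw [mul_left_comm]
  exact mul_le_mul_of_nonneg_left
    (Real.logisticLoss_sub_logisticLoss_ge (hmargin r₀ hr₀ x y y') (hmargin r hr x y y'))
    (add_nonneg (hP x y y') (hP x y' y))

lemma ePt_eq_of_diag_eq_zero [DecidableEq Y] (P f : X → Y → Y → ℝ) (hf : ∀ x y, f x y y = 0) :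
    ePt P f = (∑ x, ∑ y, ∑ y', (P x y y' + P x y' y) * f x y y') / (2 * Zconst P) := by
  unfold ePt
  congr 1
  refine Finset.sum_congr rfl fun x _ => Finset.sum_congr rfl fun y _ =>
    Finset.sum_congr rfl fun y' _ => ?_
  by_cases h : y = y'
  · simp [h, hf]
  · simp [h]

lemma sum_sum_mul_sub_sq (q h : Y → ℝ) (hq : ∑ y, q y = 1) :
    ∑ y, ∑ y', q y * q y' * (h y - h y') ^ 2 =
      2 * ((∑ y, q y * h y ^ 2) - (∑ y, q y * h y) ^ 2) := by
  have expand : ∀ y y', q y * q y' * (h y - h y') ^ 2 =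
      q y * h y ^ 2 * q y' - 2 * (q y * h y * (q y' * h y')) + q y * (q y' * h y' ^ 2) :=
    fun _ _ => by ring
  simp_rw [expand, Finset.sum_add_distrib, Finset.sum_sub_distrib, ← Finset.mul_sum,
    ← Finset.sum_mul, hq]
  ring

lemma eQpair_sq_margin_sub (Qx : X → ℝ) {Qy : X → Y → ℝ} (hQy : ∀ x, ∑ y, Qy x y = 1)
    (f g : X → Y → ℝ) :
    eQpair Qx Qy (fun x y y' => ((f x y - f x y') - (g x y - g x y')) ^ 2) =
      2 * tVar Qx Qy (f - g) := by
  rw [eQpair, tVar, Finset.mul_sum]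
  refine Finset.sum_congr rfl fun x _ => ?_
  have hpair := sum_sum_mul_sub_sq (Qy x) (fun y => f x y - g x y) (hQy x)
  simp only [Pi.sub_apply]
  rw [mul_left_comm, ← hpair, Finset.mul_sum]
  exact Finset.sum_congr rfl fun y _ => by
    rw [Finset.mul_sum]
    exact Finset.sum_congr rfl fun y' _ => by ring

end FiniteSums

theorem stmt_17_general {X Y : Type*} [Fintype X] [Fintype Y] [DecidableEq Y]
    (P : X → Y → Y → ℝ) (PX : X → ℝ) (pplus pminus : X → Y → ℝ)
    (rstar : X → Y → ℝ)
    (hPX0 : ∀ x, 0 < PX x)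
    (hm0 : ∀ x y, 0 < pminus x y)
    (hlink : ∀ x y, pplus x y = Real.exp (rstar x y) * pminus x y)
    (hfact : ∀ x yp ym, P x yp ym = PX x * pplus x yp * pminus x ym)
    (hZ : 0 < Zconst P)
    (Qx : X → ℝ) (Qy : X → Y → ℝ)
    (hQy1 : ∀ x, ∑ y, Qy x y = 1)
    (B : ℝ)
    (H : Set (X → Y → ℝ)) (hHB : ∀ f ∈ H, ∀ x y, |f x y| ≤ B)
    (hrstarH : rstar ∈ H)
    (lam : ℝ) (hlam : 0 < lam)
    (hconn : ∀ f ∈ H, ∀ g ∈ H,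
      ePt P (fun x y y' => ((f x y - f x y') - (g x y - g x y')) ^ 2) ≥
        lam * tVar Qx Qy (f - g)) :
    ∀ r ∈ H,
      eQpair Qx Qy (fun x y y' => ((r x y - r x y') - (rstar x y - rstar x y')) ^ 2) ≤
        (4 / (lam * Zconst P * (sigmoid (2 * B) * (1 - sigmoid (2 * B))))) *
          (LBT P r - LBT P rstar) := by
  intro r hr
  rw [sigmoid_eq_real_sigmoid]
  set K := Real.sigmoid (2 * B) * (1 - Real.sigmoid (2 * B))
  have hK : 0 < K := mul_pos (Real.sigmoid_pos _) (sub_pos.2 (Real.sigmoid_lt_one _))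
  set S := ∑ x, ∑ y, ∑ y', (P x y y' + P x y' y) * ((r x y - r x y') - (rstar x y - rstar x y')) ^ 2
  have hP : ∀ x y y', 0 ≤ P x y y' := fun x y y' => by
    rw [hfact, hlink]
    exact mul_nonneg (mul_nonneg (hPX0 x).le (mul_pos (Real.exp_pos _) (hm0 x y)).le) (hm0 x y').le
  have hloss : K / 4 * S ≤ LBT P r - LBT P rstar :=
    LBT_sub_LBT_ge hP (apply_eq_add_swap_mul_sigmoid hlink hfact) (hHB rstar hrstarH) (hHB r hr)
  have hvar : lam * tVar Qx Qy (r - rstar) * (2 * Zconst P) ≤ S := by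
    rw [← le_div_iff₀ (by positivity), ← ePt_eq_of_diag_eq_zero _ _ fun x y => by ring]
    exact hconn r hr rstar hrstarH
  rw [eQpair_sq_margin_sub Qx hQy1, div_mul_eq_mul_div, le_div_iff₀ (by positivity)]
  calc 2 * tVar Qx Qy (r - rstar) * (lam * Zconst P * K)
      = K * (lam * tVar Qx Qy (r - rstar) * (2 * Zconst P)) := by ring
    _ ≤ K * S := by gcongr
    _ ≤ 4 * (LBT P r - LBT P rstar) := by linarith

/-- Realizable estimation bound: for a BT-consistent P with connectivity constant λ for the
bounded class ℋ ∋ r*, every r ∈ ℋ satisfies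
E_{Q_pair}[(Δ_r − Δ_{r*})²] ≤ (4/(λ·Z·c_B))·(L_BT(r) − L_BT(r*)), c_B = σ(2B)(1−σ(2B)). -/
theorem stmt_17 {X Y : Type*} [Fintype X] [Fintype Y] [DecidableEq Y]
    [Nonempty X] [Nonempty Y]
    (P : X → Y → Y → ℝ) (PX : X → ℝ) (pplus pminus : X → Y → ℝ)
    (rstar : X → Y → ℝ)
    (hPX0 : ∀ x, 0 < PX x) (hPX1 : ∑ x, PX x = 1)
    (hm0 : ∀ x y, 0 < pminus x y)
    (hp1 : ∀ x, ∑ y, pplus x y = 1) (hm1 : ∀ x, ∑ y, pminus x y = 1)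
    (hlink : ∀ x y, pplus x y = Real.exp (rstar x y) * pminus x y)
    (hfact : ∀ x yp ym, P x yp ym = PX x * pplus x yp * pminus x ym)
    (hZ : 0 < Zconst P)
    (Qx : X → ℝ) (Qy : X → Y → ℝ)
    (hQx0 : ∀ x, 0 ≤ Qx x) (hQx1 : ∑ x, Qx x = 1)
    (hQy0 : ∀ x y, 0 ≤ Qy x y) (hQy1 : ∀ x, ∑ y, Qy x y = 1)
    (B : ℝ) (hB : 0 < B)
    (H : Set (X → Y → ℝ)) (hHB : ∀ f ∈ H, ∀ x y, |f x y| ≤ B)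
    (hrstarH : rstar ∈ H)
    (lam : ℝ) (hlam : 0 < lam)
    (hconn : ∀ f ∈ H, ∀ g ∈ H,
      ePt P (fun x y y' => ((f x y - f x y') - (g x y - g x y')) ^ 2) ≥
        lam * tVar Qx Qy (f - g)) :
    ∀ r ∈ H,
      eQpair Qx Qy (fun x y y' => ((r x y - r x y') - (rstar x y - rstar x y')) ^ 2) ≤
        (4 / (lam * Zconst P * (sigmoid (2 * B) * (1 - sigmoid (2 * B))))) *
          (LBT P r - LBT P rstar) :=
  stmt_17_general P PX pplus pminus rstar hPX0 hm0 hlink hfact hZ Qx Qy hQy1 B H hHB hrstarH lam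
    hlam hconn
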